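/- Let q = 2^m with m ≥ 1 and let n be an odd positive integer. Let L(x) = ∑_{i=0}^{N} b_i x^{2^i} be a linearized polynomial with all coefficients b_i ∈ F_q, let a ∈ F_q, and define F(x) = x·(L(Tr(x)) + a·Tr(x) + a·x) on F_{q^n}. Then for every y ∈ F_q and every z ∈ ker Tr = {x ∈ F_{q^n} : Tr(x) = 0}, one has Tr(F(y+z)) = y·L(y) and F(y+z) + Tr(F(y+z)) = a·z^2 + (L(y) + a·y)·z, and the element a·z^2 + (L(y) + a·y)·z lies in ker Tr. In other words, under the direct sum decomposition F_{q^n} ≅ F_q ⊕ ker Tr given by x ↦ (Tr(x), x + Tr(x)), the map F is represented by the triangular bivariate system (y, z) ↦ ( y·L(y), a·z^2 + (L(y) + a·y)·z ). -/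

import Mathlib

/-!
Elements fixed by `x ↦ x ^ q` pass through the trace as scalars, and in characteristic 2 with
`n` odd the trace restricts to the identity on them. Since `Tr` is additive and commutes with
squaring, for `y ∈ F_q` and `z ∈ ker Tr` we get `Tr (y + z) = y`, hence
`F (y + z) = (y + z) (L(y) + a z) = y L(y) + (a z² + (L(y) + a y) z)`, where the first summand
is in `F_q` and the second has trace `a Tr(z)² + (L(y) + a y) Tr(z) = 0`.
-/

/-- The trace map from `F_{q^n}` to `F_q`: `Tr(x) = ∑_{i=0}^{n-1} x^{q^i}`. -/
def fieldTr {K : Type*} [Field K] (q n : ℕ) (x : K) : K :=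
  ∑ i ∈ Finset.range n, x ^ q ^ i

/-- The linearized polynomial `L(x) = ∑_{i=0}^{N} b_i x^{2^i}`. -/
def linPoly {K : Type*} [Field K] (N : ℕ) (b : ℕ → K) (x : K) : K :=
  ∑ i ∈ Finset.range (N + 1), b i * x ^ 2 ^ i

lemma pow_pow_eq_self_of_pow_eq_self {M : Type*} [Monoid M] {c : M} {q : ℕ} (hc : c ^ q = c)
    (i : ℕ) : c ^ q ^ i = c := by
  induction i with
  | zero => simp
  | succ i ih => rw [pow_succ, pow_mul, ih, hc]

section Trace

variable {K : Type*} [Field K] {q : ℕ} (n : ℕ)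

lemma fieldTr_of_pow_eq_self {c : K} (hc : c ^ q = c) : fieldTr q n c = n * c := by
  simp [fieldTr, pow_pow_eq_self_of_pow_eq_self hc]

lemma fieldTr_mul_of_pow_eq_self {c : K} (hc : c ^ q = c) (x : K) :
    fieldTr q n (c * x) = c * fieldTr q n x := by
  simp only [fieldTr, Finset.mul_sum, mul_pow, pow_pow_eq_self_of_pow_eq_self hc]

section CharP

variable {p : ℕ} [Fact p.Prime] [CharP K p]

lemma fieldTr_add (m : ℕ) (x y : K) :
    fieldTr (p ^ m) n (x + y) = fieldTr (p ^ m) n x + fieldTr (p ^ m) n y := by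
  simp only [fieldTr, ← Finset.sum_add_distrib, ← pow_mul, add_pow_char_pow]

lemma fieldTr_pow_char (x : K) : fieldTr q n (x ^ p) = fieldTr q n x ^ p := by
  simp only [fieldTr, sum_pow_char, ← pow_mul, mul_comm p]

lemma linPoly_pow_eq_self (m N : ℕ) {b : ℕ → K} (hb : ∀ i ≤ N, b i ^ p ^ m = b i) {y : K}
    (hy : y ^ p ^ m = y) : linPoly N b y ^ p ^ m = linPoly N b y := by
  rw [linPoly, sum_pow_char_pow]
  refine Finset.sum_congr rfl fun i hi => ?_
  rw [mul_pow, hb i (Nat.lt_succ_iff.mp (Finset.mem_range.mp hi)), ← pow_mul, mul_comm (2 ^ i),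
    pow_mul, hy]

end CharP

section CharTwo

variable [CharP K 2]

lemma fieldTr_of_pow_eq_self_of_odd {n : ℕ} (hn : Odd n) {c : K} (hc : c ^ q = c) :
    fieldTr q n c = c := by
  rw [fieldTr_of_pow_eq_self n hc, natCast_eq_one_of_odd_of_two_eq_zero hn CharTwo.two_eq_zero,
    one_mul]

lemma fieldTr_quadratic_eq_zero (m : ℕ) {a c z : K} (ha : a ^ 2 ^ m = a) (hc : c ^ 2 ^ m = c)
    (hz : fieldTr (2 ^ m) n z = 0) : fieldTr (2 ^ m) n (a * z ^ 2 + c * z) = 0 := by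
  rw [fieldTr_add, fieldTr_mul_of_pow_eq_self n ha, fieldTr_mul_of_pow_eq_self n hc,
    fieldTr_pow_char, hz]
  ring

end CharTwo

end Trace

theorem triangular_representation_general (m n : ℕ) (hn : Odd n)
    (K : Type*) [Field K] [Fintype K] (hcard : Fintype.card K = 2 ^ (m * n))
    (N : ℕ) (b : ℕ → K) (hb : ∀ i ≤ N, b i ^ 2 ^ m = b i)
    (a : K) (haF : a ^ 2 ^ m = a)
    (F : K → K)
    (hF : ∀ x : K, F x =
      x * (linPoly N b (fieldTr (2 ^ m) n x) + a * fieldTr (2 ^ m) n x + a * x)) :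
    ∀ y z : K, y ^ 2 ^ m = y → fieldTr (2 ^ m) n z = 0 →
      fieldTr (2 ^ m) n (F (y + z)) = y * linPoly N b y
      ∧ F (y + z) + fieldTr (2 ^ m) n (F (y + z))
          = a * z ^ 2 + (linPoly N b y + a * y) * z
      ∧ fieldTr (2 ^ m) n (a * z ^ 2 + (linPoly N b y + a * y) * z) = 0 := by
  have : CharP K 2 := charP_of_card_eq_prime_pow hcard
  have h2 : (2 : K) = 0 := CharTwo.two_eq_zero
  intro y z hy hz
  set c := linPoly N b y
  have hc : c ^ 2 ^ m = c := linPoly_pow_eq_self m N hb hy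
  have hTr_yz : fieldTr (2 ^ m) n (y + z) = y := by
    rw [fieldTr_add, fieldTr_of_pow_eq_self_of_odd hn hy, hz, add_zero]
  have hF_yz : F (y + z) = y * c + (a * z ^ 2 + (c + a * y) * z) := by
    rw [hF, hTr_yz]
    linear_combination (a * y ^ 2 + a * y * z) * h2
  have hker : fieldTr (2 ^ m) n (a * z ^ 2 + (c + a * y) * z) = 0 :=
    fieldTr_quadratic_eq_zero n m haF (by rw [add_pow_char_pow, mul_pow, hc, haF, hy]) hz
  have hTr_F : fieldTr (2 ^ m) n (F (y + z)) = y * c := by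
    rw [hF_yz, fieldTr_add, hker, add_zero,
      fieldTr_of_pow_eq_self_of_odd hn (by rw [mul_pow, hy, hc])]
  refine ⟨hTr_F, ?_, hker⟩
  rw [hTr_F, hF_yz]
  linear_combination (y * c) * h2

/-- Under the direct sum decomposition `F_{q^n} ≅ F_q ⊕ ker Tr` (`q = 2^m`, `n` odd),
the map `F(x) = x·(L(Tr(x)) + a·Tr(x) + a·x)` is represented by the triangular bivariate
system `(y, z) ↦ (y·L(y), a·z² + (L(y) + a·y)·z)`: for `y ∈ F_q` and `z ∈ ker Tr`,
`Tr(F(y+z)) = y·L(y)`, `F(y+z) + Tr(F(y+z)) = a·z² + (L(y)+a·y)·z`, and the latter lies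
in `ker Tr`. -/
theorem triangular_representation (m n : ℕ) (hm : 1 ≤ m) (hn : Odd n)
    (K : Type*) [Field K] [Fintype K] (hcard : Fintype.card K = 2 ^ (m * n))
    (N : ℕ) (b : ℕ → K) (hb : ∀ i ≤ N, b i ^ 2 ^ m = b i)
    (a : K) (haF : a ^ 2 ^ m = a)
    (F : K → K)
    (hF : ∀ x : K, F x =
      x * (linPoly N b (fieldTr (2 ^ m) n x) + a * fieldTr (2 ^ m) n x + a * x)) :
    ∀ y z : K, y ^ 2 ^ m = y → fieldTr (2 ^ m) n z = 0 →
      fieldTr (2 ^ m) n (F (y + z)) = y * linPoly N b y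
      ∧ F (y + z) + fieldTr (2 ^ m) n (F (y + z))
          = a * z ^ 2 + (linPoly N b y + a * y) * z
      ∧ fieldTr (2 ^ m) n (a * z ^ 2 + (linPoly N b y + a * y) * z) = 0 :=
  triangular_representation_general m n hn K hcard N b hb a haF F hF
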